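/- arXiv:2112.07425 — 2 statements merged into one kernel-verified Lean document; each statement's English description precedes it below -/
import Mathlib

section
/- Let D be a finite subset of a group G and suppose {K_1,...,K_s} ε-quasi-tiles D with tiling centers C_1,...,C_s (0 < ε < 1/4). Then one can shrink each translate: for each j and each c ∈ C_j there is a subset K_j(c) ⊆ K_j with |K_j(c)| ≥ (1−ε)|K_j| such that the sets {K_j(c)c : c ∈ C_j, 1 ≤ j ≤ s} are pairwise disjoint and their union has cardinality at least (1−ε)²|D|. -/
open MeasureTheory Filter Topology Set Pointwise
open scoped NNReal ENNReal

namespace Paper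

/-- The `K`-boundary of a finite set `F` in a group `G`. -/
def bdry {G : Type*} [Group G] (K F : Finset G) : Set G :=
  {c : G | (∃ k ∈ K, k * c ∈ F) ∧ (∃ k ∈ K, k * c ∉ F)}

/-- `F` is `(K, δ)`-invariant. -/
def KInvariant {G : Type*} [Group G] (K : Finset G) (δ : ℝ) (F : Finset G) : Prop :=
  (((bdry K F).ncard : ℝ)) < δ * F.card

/-- `{F n}` is a Følner sequence of nonempty finite subsets. -/
def IsFolner {G : Type*} [Group G] [DecidableEq G] (Fseq : ℕ → Finset G) : Prop :=
  (∀ n, (Fseq n).Nonempty) ∧ ∀ g : G,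
    Tendsto (fun n =>
      (((((Fseq n).image (g * ·)) \ Fseq n) ∪ (Fseq n \ ((Fseq n).image (g * ·)))).card : ℝ)
        / ((Fseq n).card : ℝ)) atTop (𝓝 0)

/-- A tempered Følner sequence. -/
def Tempered {G : Type*} [Group G] [DecidableEq G] (Kseq : ℕ → Finset G) : Prop :=
  ∃ C : ℝ, 0 < C ∧ ∀ n : ℕ,
    ((((Finset.range n).biUnion fun k => (Kseq k)⁻¹ * Kseq n)).card : ℝ) ≤ C * (Kseq n).card

section Dyn

variable {G X : Type*} [Group G] [MulAction G X] [MetricSpace X]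

/-- The Bowen metric `ρ_F(x,y) = max_{s ∈ F} ρ(sx, sy)` (as a nonnegative real). -/
noncomputable def rhoF (F : Finset G) (x y : X) : ℝ≥0 :=
  F.sup fun s => nndist (s • x) (s • y)

/-- Open Bowen ball. -/
def bball (F : Finset G) (x : X) (ε : ℝ) : Set X := {y | (rhoF F x y : ℝ) < ε}

/-- Closed Bowen ball. -/
def cball (F : Finset G) (x : X) (ε : ℝ) : Set X := {y | (rhoF F x y : ℝ) ≤ ε}

/-- `E` is `(F, ε)`-separated. -/
def IsSep (F : Finset G) (ε : ℝ) (E : Set X) : Prop :=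
  ∀ x ∈ E, ∀ y ∈ E, x ≠ y → ε < (rhoF F x y : ℝ)

/-- Maximal cardinality of an `(F, ε)`-separated subset of `Z`. -/
noncomputable def sepNum (F : Finset G) (ε : ℝ) (Z : Set X) : ℕ :=
  sSup {m | ∃ E : Finset X, (E : Set X) ⊆ Z ∧ IsSep F ε (E : Set X) ∧ E.card = m}

/-- Minimal cardinality of an `(F, ε)`-spanning set for `Z`. -/
noncomputable def spanNum (F : Finset G) (ε : ℝ) (Z : Set X) : ℕ :=
  sInf {m | ∃ E : Finset X, (∀ z ∈ Z, ∃ x ∈ E, (rhoF F x z : ℝ) ≤ ε) ∧ E.card = m}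

/-- Upper capacity topological entropy of `Z` along `{F n}` (via separated sets). -/
noncomputable def hUC (Fseq : ℕ → Finset G) (Z : Set X) : ℝ :=
  ⨆ (ε : ℝ) (_ : 0 < ε),
    limsup (fun n => Real.log (sepNum (Fseq n) ε Z) / ((Fseq n).card : ℝ)) atTop

/-- Upper capacity topological entropy of `Z` along `{F n}` (via spanning sets). -/
noncomputable def hUCspan (Fseq : ℕ → Finset G) (Z : Set X) : ℝ :=
  ⨆ (ε : ℝ) (_ : 0 < ε),
    limsup (fun n => Real.log (spanNum (Fseq n) ε Z) / ((Fseq n).card : ℝ)) atTop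

/-- Packing pre-measure `P(Z, ε, N, s)`: sup of `∑ exp(-s |F_{n_i}|)` over countable
pairwise disjoint families of closed Bowen balls with centers in `Z` and indices `≥ N`. -/
noncomputable def packPre (Fseq : ℕ → Finset G) (Z : Set X) (ε s : ℝ) (N : ℕ) : ℝ≥0∞ :=
  ⨆ (I : Set ℕ) (nx : ℕ → ℕ × X)
    (_ : ∀ i ∈ I, (nx i).2 ∈ Z ∧ N ≤ (nx i).1)
    (_ : I.PairwiseDisjoint fun i => cball (Fseq (nx i).1) (nx i).2 ε),
    ∑' i : I, ENNReal.ofReal (Real.exp (-s * ((Fseq (nx (i : ℕ)).1).card : ℝ)))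

noncomputable def packP (Fseq : ℕ → Finset G) (Z : Set X) (ε s : ℝ) : ℝ≥0∞ :=
  ⨅ N : ℕ, packPre Fseq Z ε s N

/-- The Carathéodory-modified packing construction `𝒫(Z, ε, s)`. -/
noncomputable def packM (Fseq : ℕ → Finset G) (Z : Set X) (ε s : ℝ) : ℝ≥0∞ :=
  ⨅ (Zs : ℕ → Set X) (_ : Z ⊆ ⋃ i, Zs i), ∑' i, packP Fseq (Zs i) ε s

/-- Packing entropy at scale `ε`: the critical exponent of `𝒫(Z, ε, ·)`. -/
noncomputable def hPackE (Fseq : ℕ → Finset G) (Z : Set X) (ε : ℝ) : ℝ :=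
  sInf {s : ℝ | packM Fseq Z ε s = 0}

/-- Amenable packing topological entropy of `Z` along `{F n}`. -/
noncomputable def hPack (Fseq : ℕ → Finset G) (Z : Set X) : ℝ :=
  ⨆ (ε : ℝ) (_ : 0 < ε), hPackE Fseq Z ε

/-- Bowen pre-measure `M(Z, ε, N, s)`: inf of `∑ exp(-s |F_{n_i}|)` over countable covers of
`Z` by open Bowen balls with indices `≥ N`. -/
noncomputable def bowenPre (Fseq : ℕ → Finset G) (Z : Set X) (ε s : ℝ) (N : ℕ) : ℝ≥0∞ :=
  ⨅ (nx : ℕ → ℕ × X) (_ : ∀ i, N ≤ (nx i).1)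
    (_ : Z ⊆ ⋃ i, bball (Fseq (nx i).1) (nx i).2 ε),
    ∑' i, ENNReal.ofReal (Real.exp (-s * ((Fseq (nx i).1).card : ℝ)))

noncomputable def bowenM (Fseq : ℕ → Finset G) (Z : Set X) (ε s : ℝ) : ℝ≥0∞ :=
  ⨆ N : ℕ, bowenPre Fseq Z ε s N

/-- Bowen entropy at scale `ε`: the critical exponent. -/
noncomputable def hBowE (Fseq : ℕ → Finset G) (Z : Set X) (ε : ℝ) : ℝ :=
  sInf {s : ℝ | bowenM Fseq Z ε s = 0}

/-- Bowen topological entropy of `Z` along `{F n}`. -/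
noncomputable def hBow (Fseq : ℕ → Finset G) (Z : Set X) : ℝ :=
  ⨆ (ε : ℝ) (_ : 0 < ε), hBowE Fseq Z ε

/-- The mistake dynamical ball `B(g; F, x, ε)`. -/
noncomputable def mistakeBall (gv : ℝ) (F : Finset G) (x : X) (ε : ℝ) : Set X :=
  {y | ((F.filter fun s => ε < dist (s • x) (s • y)).card : ℝ) ≤ gv * F.card}

/-- A mistake-density function. -/
def MistakeDensity (g : ℝ → ℝ) : Prop :=
  (∀ r ∈ Set.Ioo (0:ℝ) 1, g r ∈ Set.Ioo (0:ℝ) 1) ∧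
  (∀ r s : ℝ, 0 < r → r ≤ s → s < 1 → g r ≤ g s) ∧
  Tendsto g (𝓝[>] (0:ℝ)) (𝓝 0)

/-- The `g`-almost product property for the action of `G` on `X`. -/
def GAlmostProduct (g : ℝ → ℝ) (m : ℝ → Finset G × ℝ) : Prop :=
  ∀ (k : ℕ) (ε : Fin k → ℝ) (x : Fin k → X) (F : Fin k → Finset G),
    (∀ i, ε i ∈ Set.Ioo (0:ℝ) 1) →
    (∀ i, (F i).Nonempty) →
    (Pairwise fun i j => Disjoint (F i) (F j)) →
    (∀ i, KInvariant (m (ε i)).1 (m (ε i)).2 (F i)) →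
    (⋂ i, mistakeBall (g (ε i)) (F i) (x i) (ε i)).Nonempty

/-- `E` is `(δ, F, ε)`-separated. -/
noncomputable def DSep (δ ε : ℝ) (F : Finset G) (E : Set X) : Prop :=
  ∀ x ∈ E, ∀ y ∈ E, x ≠ y →
    δ * F.card ≤ ((F.filter fun s => ε < dist (s • x) (s • y)).card : ℝ)

end Dyn

section Meas

variable {G X : Type*} [Group G] [DecidableEq G] [MulAction G X] [MeasurableSpace X]

/-- The empirical measure `E_F(x) = (1/|F|) ∑_{s ∈ F} δ_{sx}`. -/
noncomputable def emp (F : Finset G) (x : X) : Measure X :=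
  ((F.card : ℝ≥0∞))⁻¹ • ∑ s ∈ F, Measure.dirac (s • x)

lemma emp_prob (F : Finset G) (hF : F.Nonempty) (x : X) :
    IsProbabilityMeasure (emp (X := X) F x) := by
  constructor
  have h1 : (∑ s ∈ F, Measure.dirac (s • x)) (univ : Set X) = (F.card : ℝ≥0∞) := by
    simp [Measure.finset_sum_apply]
  simp only [emp, Measure.smul_apply, smul_eq_mul, h1]
  exact ENNReal.inv_mul_cancel (by exact_mod_cast hF.card_ne_zero) (by simp)

/-- The empirical measure as a probability measure. -/
noncomputable def empP (F : Finset G) (hF : F.Nonempty) (x : X) : ProbabilityMeasure X :=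
  ⟨emp F x, emp_prob F hF x⟩

/-- A `G`-invariant measure. -/
def InvMeas (G : Type*) [Group G] [MulAction G X] (μ : Measure X) : Prop :=
  ∀ g : G, Measure.map (fun x : X => g • x) μ = μ

/-- An ergodic `G`-invariant measure. -/
def ErgMeas (G : Type*) [Group G] [MulAction G X] (μ : Measure X) : Prop :=
  InvMeas G μ ∧ ∀ A : Set X, MeasurableSet A →
    (∀ g : G, (fun x : X => g • x) ⁻¹' A = A) → μ A = 0 ∨ μ A = 1

/-- The Shannon entropy of the join `⋁_{s ∈ F} s⁻¹ P` of a finite partition `P` of `X`. -/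
noncomputable def partEnt (μ : Measure X) (F : Finset G) {k : ℕ} (P : Fin k → Set X) : ℝ :=
  ∑ f : (F → Fin k),
    Real.negMulLog ((μ (⋂ s : F, {x : X | (s : G) • x ∈ P (f s)})).toReal)

/-- The measure-theoretic (Kolmogorov–Sinai) entropy of `μ` with respect to the `G`-action,
computed along the Følner sequence `{F n}`: the supremum over finite measurable partitions of
the asymptotic average Shannon entropy of the join. -/
noncomputable def hKS (Fseq : ℕ → Finset G) (μ : Measure X) : ℝ :=
  ⨆ (k : ℕ) (P : Fin k → Set X) (_ : ∀ i, MeasurableSet (P i))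
    (_ : Pairwise (Function.onFun Disjoint P)) (_ : (⋃ i, P i) = univ),
    limsup (fun n => partEnt μ (Fseq n) P / ((Fseq n).card : ℝ)) atTop

end Meas

section MeasTop

variable {G X : Type*} [Group G] [DecidableEq G] [MulAction G X] [MetricSpace X]
  [MeasurableSpace X]

/-- The set of weak* limit points of the empirical measures `E_{F_n}(x)`. -/
noncomputable def Vlim [OpensMeasurableSpace X] (Fseq : ℕ → Finset G)
    (hF : ∀ n, (Fseq n).Nonempty) (x : X) : Set (ProbabilityMeasure X) :=
  {μ | MapClusterPt μ atTop fun n => empP (Fseq n) (hF n) x}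

/-- The uniform separation property (with respect to a tempered Følner sequence `{K n}`). -/
noncomputable def UniformSeparation [OpensMeasurableSpace X]
    (Kseq : ℕ → Finset G) (hK : ∀ n, (Kseq n).Nonempty) : Prop :=
  ∀ η > (0:ℝ), ∃ ε' > (0:ℝ), ∃ δ' > (0:ℝ),
    ∀ μ : ProbabilityMeasure X, ErgMeas G μ.toMeasure →
      ∀ C ∈ 𝓝 μ, ∃ N : ℕ, ∀ n ≥ N, ∃ E : Finset X,
        (∀ x ∈ E, empP (Kseq n) (hK n) x ∈ C) ∧ DSep δ' ε' (Kseq n) (E : Set X) ∧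
        Real.exp (((Kseq n).card : ℝ) * (hKS Kseq μ.toMeasure - η)) ≤ (E.card : ℝ)

/-- The averaged empirical measure `ν = (1/|E|) ∑_{x ∈ E} E_F(x)`. -/
noncomputable def avgEmp [DecidableEq X] (F : Finset G) (hF : F.Nonempty) (E : Finset X)
    (hE : E.Nonempty) : ProbabilityMeasure X :=
  ⟨((E.card : ℝ≥0∞))⁻¹ • ∑ x ∈ E, (empP F hF x : Measure X), by
    constructor
    have h1 : (∑ x ∈ E, (empP (X := X) F hF x : Measure X)) (univ : Set X)
        = (E.card : ℝ≥0∞) := by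
      rw [Measure.finset_sum_apply]
      have : ∀ x ∈ E, (empP (X := X) F hF x : Measure X) univ = 1 := by
        intro x _
        exact (emp_prob F hF x).measure_univ
      rw [Finset.sum_congr rfl this]
      simp
    simp only [Measure.smul_apply, smul_eq_mul, h1]
    exact ENNReal.inv_mul_cancel (by exact_mod_cast hE.card_ne_zero) (by simp)⟩

/-- The upper local entropy of `μ` at `x` along `{F n}`. -/
noncomputable def upLoc (Fseq : ℕ → Finset G) (μ : Measure X) (x : X) : ℝ :=
  ⨆ (ε : ℝ) (_ : 0 < ε),
    limsup (fun n => -Real.log ((μ (bball (Fseq n) x ε)).toReal) / ((Fseq n).card : ℝ)) atTop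

end MeasTop

/-- The weak* distance `D(μ,ν) = ∑_i |⟨φ_i, μ⟩ − ⟨φ_i, ν⟩| / 2^i` given by a family of
continuous test functions. -/
noncomputable def Dm {X : Type*} [TopologicalSpace X] [MeasurableSpace X]
    (φ : ℕ → C(X, ℝ)) (μ ν : Measure X) : ℝ :=
  ∑' i : ℕ, |(∫ x, φ i x ∂μ) - ∫ x, φ i x ∂ν| / 2 ^ i

end Paper


open Paper MeasureTheory Filter Topology Set Pointwise
open scoped NNReal ENNReal

theorem quasi_tile_shrink {G : Type*} [Group G] [DecidableEq G] {s : ℕ} (hs : 0 < s)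
    (D : Finset G) (K C : Fin s → Finset G) (ε : ℝ) (hε0 : 0 < ε) (hε4 : ε < 1/4)
    (h1 : ∀ j, K j * C j ⊆ D)
    (h2 : Pairwise (Function.onFun Disjoint fun j => K j * C j))
    (h3 : ∀ j, ∃ B : G → Finset G, (∀ c ∈ C j, B c ⊆ (K j).image (· * c)) ∧
      (∀ c ∈ C j, (1 - ε) * ((K j).card : ℝ) < ((B c).card : ℝ)) ∧
      ((C j : Set G).PairwiseDisjoint fun c => B c))
    (h4 : (1 - ε) * (D.card : ℝ) ≤
      (((D ∩ Finset.univ.biUnion fun j => K j * C j)).card : ℝ)) :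
    ∃ K' : Fin s → G → Finset G,
      (∀ j, ∀ c ∈ C j, K' j c ⊆ K j ∧ (1 - ε) * ((K j).card : ℝ) ≤ ((K' j c).card : ℝ)) ∧
      (∀ j₁ j₂ : Fin s, ∀ c₁ ∈ C j₁, ∀ c₂ ∈ C j₂, (j₁, c₁) ≠ (j₂, c₂) →
        Disjoint ((K' j₁ c₁).image (· * c₁)) ((K' j₂ c₂).image (· * c₂))) ∧
      (1 - ε) ^ 2 * (D.card : ℝ) ≤
        (((Finset.univ.biUnion fun j => (C j).biUnion fun c => (K' j c).image (· * c))).card : ℝ) := by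
  choose B hB1 hB2 hB3 using h3
  have hε1 : (0:ℝ) ≤ 1 - ε := by linarith
  set K' : Fin s → G → Finset G := fun j c => (K j).filter (fun k => k * c ∈ B j c) with hK'
  have himg : ∀ j, ∀ c ∈ C j, (K' j c).image (· * c) = B j c := by
    intro j c hc
    apply Finset.Subset.antisymm
    · intro x hx
      simp only [hK', Finset.mem_image, Finset.mem_filter] at hx
      obtain ⟨k, ⟨_, hk⟩, rfl⟩ := hx
      exact hk
    · intro x hx
      have hx2 := hB1 j c hc hx
      simp only [Finset.mem_image] at hx2 ⊢
      obtain ⟨k, hk, rfl⟩ := hx2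
      exact ⟨k, by simp [hK', hk, hx], rfl⟩
  have hcard : ∀ j, ∀ c ∈ C j, (K' j c).card = (B j c).card := by
    intro j c hc
    rw [← himg j c hc, Finset.card_image_of_injective _ (mul_left_injective c)]
  have hsubKC : ∀ j, ∀ c ∈ C j, (K' j c).image (· * c) ⊆ K j * C j := by
    intro j c hc x hx
    simp only [Finset.mem_image] at hx
    obtain ⟨k, hk, rfl⟩ := hx
    exact Finset.mul_mem_mul (Finset.filter_subset _ _ hk) hc
  have hbUsub : ∀ j, ((C j).biUnion fun c => (K' j c).image (· * c)) ⊆ K j * C j := by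
    intro j x hx
    simp only [Finset.mem_biUnion] at hx
    obtain ⟨c, hc, hx⟩ := hx
    exact hsubKC j c hc hx
  refine ⟨K', ?_, ?_, ?_⟩
  · intro j c hc
    refine ⟨Finset.filter_subset _ _, ?_⟩
    rw [hcard j c hc]
    exact le_of_lt (hB2 j c hc)
  · intro j₁ j₂ c₁ hc₁ c₂ hc₂ hne
    by_cases hj : j₁ = j₂
    · subst hj
      have hcne : c₁ ≠ c₂ := fun h => hne (by rw [h])
      rw [himg j₁ c₁ hc₁, himg j₁ c₂ hc₂]
      exact hB3 j₁ hc₁ hc₂ hcne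
    · exact Finset.disjoint_of_subset_left (hsubKC j₁ c₁ hc₁)
        (Finset.disjoint_of_subset_right (hsubKC j₂ c₂ hc₂) (h2 hj))
  · have hUcard : ((Finset.univ.biUnion fun j => (C j).biUnion fun c =>
        (K' j c).image (· * c))).card
        = ∑ j : Fin s, ∑ c ∈ C j, ((K' j c).image (· * c)).card := by
      rw [Finset.card_biUnion]
      · refine Finset.sum_congr rfl fun j _ => ?_
        apply Finset.card_biUnion
        intro c₁ hc₁ c₂ hc₂ hne
        dsimp only [Function.onFun]; rw [himg j c₁ hc₁, himg j c₂ hc₂]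
        exact hB3 j hc₁ hc₂ hne
      · intro j₁ _ j₂ _ hj
        exact Finset.disjoint_of_subset_left (hbUsub j₁)
          (Finset.disjoint_of_subset_right (hbUsub j₂) (h2 hj))
    have step1 : (1 - ε) * (D.card : ℝ) ≤ ∑ j : Fin s, ((K j).card : ℝ) * ((C j).card : ℝ) := by
      calc (1 - ε) * (D.card : ℝ)
          ≤ (((D ∩ Finset.univ.biUnion fun j => K j * C j)).card : ℝ) := h4
        _ ≤ (((Finset.univ.biUnion fun j => K j * C j)).card : ℝ) := by
            exact_mod_cast Finset.card_le_card (Finset.inter_subset_right)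
        _ ≤ ∑ j : Fin s, (((K j * C j)).card : ℝ) := by
            exact_mod_cast Finset.card_biUnion_le
        _ ≤ ∑ j : Fin s, ((K j).card : ℝ) * ((C j).card : ℝ) := by
            refine Finset.sum_le_sum fun j _ => ?_
            exact_mod_cast Finset.card_mul_le
    have step2 : ∀ j : Fin s, (1 - ε) * (((K j).card : ℝ) * ((C j).card : ℝ))
        ≤ ∑ c ∈ C j, (((K' j c).image (· * c)).card : ℝ) := by
      intro j
      calc (1 - ε) * (((K j).card : ℝ) * ((C j).card : ℝ))
          = ∑ _c ∈ C j, (1 - ε) * ((K j).card : ℝ) := by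
            rw [Finset.sum_const, nsmul_eq_mul]; ring
        _ ≤ ∑ c ∈ C j, (((K' j c).image (· * c)).card : ℝ) := by
            refine Finset.sum_le_sum fun c hc => ?_
            rw [himg j c hc]
            exact le_of_lt (hB2 j c hc)
    calc (1 - ε) ^ 2 * (D.card : ℝ)
        = (1 - ε) * ((1 - ε) * (D.card : ℝ)) := by ring
      _ ≤ (1 - ε) * ∑ j : Fin s, ((K j).card : ℝ) * ((C j).card : ℝ) :=
          mul_le_mul_of_nonneg_left step1 hε1
      _ = ∑ j : Fin s, (1 - ε) * (((K j).card : ℝ) * ((C j).card : ℝ)) := by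
          rw [Finset.mul_sum]
      _ ≤ ∑ j : Fin s, ∑ c ∈ C j, (((K' j c).image (· * c)).card : ℝ) :=
          Finset.sum_le_sum fun j _ => step2 j
      _ = _ := by rw [hUcard]; push_cast; rfl
end

section
/- Let G be a group with a tiling T of G with finitely many shapes, all contained in a finite set S* = ∪S_k (the union of the shapes). Let F be a finite subset of G and let I = {s ∈ F : the tile of T containing s is not contained in F}. Then |I| ≤ |S*| · |∂_{S*}(F)|. Consequently, if F is (S*, β/|S*|)-invariant, the union of tiles of T entirely contained in F has cardinality at least (1−β)|F|. -/
open MeasureTheory Filter Topology Set Pointwise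
open scoped NNReal ENNReal

open Paper MeasureTheory Filter Topology Set Pointwise
open scoped NNReal ENNReal

theorem tiling_boundary_bound {G : Type*} [Group G] [Countable G] [DecidableEq G]
    {k : ℕ} (S : Fin k → Finset G) (C : Fin k → Set G)
    (hcover : ∀ g : G, ∃ j, ∃ c ∈ C j, g ∈ (fun a => a * c) '' (S j : Set G))
    (hdisj : ∀ j₁ j₂ : Fin k, ∀ c₁ ∈ C j₁, ∀ c₂ ∈ C j₂, (j₁, c₁) ≠ (j₂, c₂) →
      Disjoint ((fun a => a * c₁) '' (S j₁ : Set G)) ((fun a => a * c₂) '' (S j₂ : Set G)))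
    (F : Finset G) (β : ℝ) (hβ0 : 0 < β) :
    (({s : G | s ∈ F ∧ ∃ j, ∃ c ∈ C j, s ∈ (fun a => a * c) '' (S j : Set G) ∧
        ¬ ((fun a => a * c) '' (S j : Set G) ⊆ (F : Set G))}).ncard : ℝ)
      ≤ ((Finset.univ.biUnion S).card : ℝ) * ((bdry (Finset.univ.biUnion S) F).ncard : ℝ) ∧
    (KInvariant (Finset.univ.biUnion S) (β / ((Finset.univ.biUnion S).card : ℝ)) F →
      (1 - β) * (F.card : ℝ) ≤
        ((⋃ j, ⋃ c ∈ C j, ⋃ (_ : (fun a => a * c) '' (S j : Set G) ⊆ (F : Set G)),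
          (fun a => a * c) '' (S j : Set G)).ncard : ℝ)) := by
  classical
  set K := Finset.univ.biUnion S with hKdef
  obtain ⟨j0, c0, -, a0, ha0, -⟩ := hcover 1
  have hSK : ∀ j, ∀ a ∈ S j, a ∈ K := fun j a ha =>
    Finset.mem_biUnion.2 ⟨j, Finset.mem_univ _, ha⟩
  have hKne : K.Nonempty := ⟨a0, hSK j0 a0 ha0⟩
  have hBfin : (bdry K F).Finite := by
    apply Set.Finite.subset (Set.Finite.biUnion K.finite_toSet
      (fun k _ => (F.finite_toSet.image (fun f => k⁻¹ * f))))
    rintro c ⟨⟨k, hk, hkc⟩, -⟩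
    exact Set.mem_biUnion hk ⟨k * c, hkc, by group⟩
  set I : Set G := {s : G | s ∈ F ∧ ∃ j, ∃ c ∈ C j, s ∈ (fun a => a * c) '' (S j : Set G) ∧
      ¬ ((fun a => a * c) '' (S j : Set G) ⊆ (F : Set G))} with hIdef
  set B := hBfin.toFinset with hBdef
  have hIsub : I ⊆ ↑(B.biUnion fun c => K.image (· * c)) := by
    rintro s ⟨hsF, j, c, hc, ⟨a, ha, rfl⟩, hnot⟩
    obtain ⟨x, ⟨b, hb, rfl⟩, hx⟩ := Set.not_subset.1 hnot
    have hcB : c ∈ B := by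
      rw [hBdef, Set.Finite.mem_toFinset]
      exact ⟨⟨a, hSK j a ha, hsF⟩, ⟨b, hSK j b hb, hx⟩⟩
    exact Finset.mem_coe.2 (Finset.mem_biUnion.2 ⟨c, hcB,
      Finset.mem_image.2 ⟨a, hSK j a ha, rfl⟩⟩)
  have hcard1 : I.ncard ≤ B.card * K.card := by
    calc I.ncard ≤ (↑(B.biUnion fun c => K.image (· * c)) : Set G).ncard :=
          Set.ncard_le_ncard hIsub (Finset.finite_toSet _)
      _ = (B.biUnion fun c => K.image (· * c)).card := Set.ncard_coe_finset _
      _ ≤ ∑ c ∈ B, (K.image (· * c)).card := Finset.card_biUnion_le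
      _ ≤ ∑ _c ∈ B, K.card := Finset.sum_le_sum fun c _ => Finset.card_image_le
      _ = B.card * K.card := by rw [Finset.sum_const, smul_eq_mul]
  have hBcard : B.card = (bdry K F).ncard := (Set.ncard_eq_toFinset_card _ hBfin).symm
  have hmain : (I.ncard : ℝ) ≤ (K.card : ℝ) * ((bdry K F).ncard : ℝ) := by
    have h2 := hcard1
    rw [hBcard] at h2
    calc (I.ncard : ℝ) ≤ (((bdry K F).ncard * K.card : ℕ) : ℝ) := by exact_mod_cast h2
      _ = (K.card : ℝ) * ((bdry K F).ncard : ℝ) := by push_cast; ring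
  refine ⟨hmain, fun hinv => ?_⟩
  set U : Set G := ⋃ j, ⋃ c ∈ C j, ⋃ (_ : (fun a => a * c) '' (S j : Set G) ⊆ (F : Set G)),
      (fun a => a * c) '' (S j : Set G) with hUdef
  have hUF : U ⊆ (F : Set G) := by
    simp only [hUdef, Set.iUnion_subset_iff]
    exact fun j c _ h => h
  have hFU : (F : Set G) \ U ⊆ I := by
    rintro s ⟨hsF, hsU⟩
    obtain ⟨j, c, hc, hmem⟩ := hcover s
    refine ⟨hsF, j, c, hc, hmem, fun hsubset => hsU ?_⟩
    exact Set.mem_iUnion.2 ⟨j, Set.mem_iUnion.2 ⟨c, Set.mem_iUnion.2 ⟨hc,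
      Set.mem_iUnion.2 ⟨hsubset, hmem⟩⟩⟩⟩
  have hsplit : ((F : Set G) \ U).ncard + U.ncard = F.card := by
    rw [Set.ncard_diff_add_ncard_of_subset hUF (Finset.finite_toSet F),
      Set.ncard_coe_finset]
  have hIfin : I.Finite := (Finset.finite_toSet F).subset (fun s hs => hs.1)
  have hdiff_le : (((F : Set G) \ U).ncard : ℝ) ≤ (I.ncard : ℝ) := by
    exact_mod_cast Set.ncard_le_ncard hFU hIfin
  have hKpos : (0 : ℝ) < (K.card : ℝ) := by exact_mod_cast hKne.card_pos
  have hinv' : ((bdry K F).ncard : ℝ) < β / (K.card : ℝ) * (F.card : ℝ) := hinv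
  have hIlt : (I.ncard : ℝ) < β * (F.card : ℝ) := by
    calc (I.ncard : ℝ) ≤ (K.card : ℝ) * ((bdry K F).ncard : ℝ) := hmain
      _ < (K.card : ℝ) * (β / (K.card : ℝ) * (F.card : ℝ)) := by
          apply mul_lt_mul_of_pos_left hinv' hKpos
      _ = β * (F.card : ℝ) := by field_simp
  have hsplit' : (((F : Set G) \ U).ncard : ℝ) + (U.ncard : ℝ) = (F.card : ℝ) := by
    exact_mod_cast hsplit
  nlinarith [hdiff_le, hIlt, hsplit']
end
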